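/- arXiv:2205.05253 — 2 statements merged into one kernel-verified Lean document; each statement's English description precedes it below -/
import Mathlib

section
/- Let X₁ and X₂ be metric spaces with X₁ ⊆ X₂, the inclusion continuous, X₁ separable, and suppose every closed ball of X₁ is closed in the topology of X₂. Then every Borel set of X₁ is a Borel set of X₂; in particular X₁ itself is a Borel subset of X₂, and the Borel σ-algebra of X₁ equals the trace on X₁ of the Borel σ-algebra of X₂. -/
/-!
Every open subset of a separable metric space is a countable union of closed balls, so the
hypothesis on balls makes the image of every open set of `X₁` Borel in `X₂`. Since the
inclusion is injective, images commute with complements relative to the (Borel) range and with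
countable unions, so the image of every Borel set is Borel: the inclusion is a measurable
embedding, and the trace statement is `MeasurableEmbedding.comap_eq`.
-/

open MeasureTheory Set Metric

theorem IsOpen.exists_countable_biUnion_closedBall {α : Type*} [PseudoMetricSpace α]
    [TopologicalSpace.SeparableSpace α] {U : Set α} (hU : IsOpen U) :
    ∃ T : Set α, T.Countable ∧ ∃ r : α → ℝ, U = ⋃ x ∈ T, closedBall x (r x) := by
  have hr : ∀ x ∈ U, ∃ ε > 0, closedBall x ε ⊆ U := fun x hx =>
    nhds_basis_closedBall.mem_iff.1 (hU.mem_nhds hx)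
  choose! r hr_pos hr_sub using hr
  -- Lindelöf: countably many of the open balls `ball x (r x)`, `x ∈ U`, already cover `U`.
  obtain ⟨T, hT_count, hT_cover⟩ :=
    TopologicalSpace.isOpen_iUnion_countable (fun x : U => ball (x : α) (r x))
      (fun _ => isOpen_ball)
  refine ⟨(↑) '' T, hT_count.image _, r, Subset.antisymm ?_ ?_⟩
  · intro x hx
    have hx' : x ∈ ⋃ y : U, ball (y : α) (r y) :=
      mem_iUnion.2 ⟨⟨x, hx⟩, mem_ball_self (hr_pos x hx)⟩
    rw [← hT_cover] at hx'
    obtain ⟨y, hyT, hxy⟩ := mem_iUnion₂.1 hx'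
    exact mem_biUnion (mem_image_of_mem _ hyT) (ball_subset_closedBall hxy)
  · intro x hx
    obtain ⟨_, ⟨y, -, rfl⟩, hxy⟩ := mem_iUnion₂.1 hx
    exact hr_sub y y.2 hxy

section Image

variable {α β : Type*} [MeasurableSpace β] {f : α → β}

theorem measurableSet_image_of_isOpen_of_isClosed_image_closedBall [PseudoMetricSpace α]
    [TopologicalSpace.SeparableSpace α] [TopologicalSpace β] [OpensMeasurableSpace β]
    (hballs : ∀ x r, IsClosed (f '' closedBall x r)) {U : Set α} (hU : IsOpen U) :
    MeasurableSet (f '' U) := by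
  obtain ⟨T, hT, r, rfl⟩ := hU.exists_countable_biUnion_closedBall
  simp only [image_iUnion₂]
  exact .biUnion hT fun x _ => (hballs x (r x)).measurableSet

theorem measurableSet_image_of_forall_isOpen [TopologicalSpace α] [MeasurableSpace α]
    [BorelSpace α] (hf : Function.Injective f)
    (hopen : ∀ U, IsOpen U → MeasurableSet (f '' U)) {S : Set α} (hS : MeasurableSet S) :
    MeasurableSet (f '' S) := by
  have hrange : MeasurableSet (range f) := image_univ ▸ hopen univ isOpen_univ
  induction S, hS using MeasurableSet.induction_on_open with
  | isOpen U hU => exact hopen U hU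
  | compl S _ hS => rw [image_compl_eq_range_sdiff_image hf]; exact hrange.diff hS
  | iUnion g _ _ hg => rw [image_iUnion]; exact .iUnion hg

end Image

/-- If `X₁` is a separable metric space continuously embedded in a metric space
`X₂`, and every closed ball of `X₁` is closed in the topology of `X₂`, then
every Borel set of `X₁` is a Borel set of `X₂` (as a subset, via the image);
in particular `X₁` (i.e. the range of the embedding) is Borel in `X₂`, and the
Borel σ-algebra of `X₁` is the trace of that of `X₂`. -/
theorem borel_trace_of_embedding
    {X₁ X₂ : Type*} [MetricSpace X₁] [MetricSpace X₂]
    [TopologicalSpace.SeparableSpace X₁]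
    [MeasurableSpace X₁] [BorelSpace X₁] [MeasurableSpace X₂] [BorelSpace X₂]
    (ι : X₁ → X₂) (hcont : Continuous ι) (hinj : Function.Injective ι)
    (hballs : ∀ (x : X₁) (r : ℝ), IsClosed (ι '' Metric.closedBall x r)) :
    (∀ S : Set X₁, MeasurableSet S → MeasurableSet (ι '' S)) ∧
    MeasurableSet (Set.range ι) ∧
    (∀ S : Set X₁, MeasurableSet S ↔ ∃ M : Set X₂, MeasurableSet M ∧ ι ⁻¹' M = S) := by
  have hemb : MeasurableEmbedding ι :=
    { injective := hinj
      measurable := hcont.measurable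
      measurableSet_image' := fun _ =>
        measurableSet_image_of_forall_isOpen hinj fun _ =>
          measurableSet_image_of_isOpen_of_isClosed_image_closedBall hballs }
  refine ⟨fun _ => hemb.measurableSet_image.2, hemb.measurableSet_range, fun S => ?_⟩
  conv_lhs => rw [← hemb.comap_eq]
  exact MeasurableSpace.measurableSet_comap
end

section
/- For γ ≥ 0 and k₁, ρ ≥ 0, define χ(y) = k₁(y² + γy) + ρ(γ + y) and j(y) = y(y+1) for y ≥ 0. Then inf over positive integers i of 4χ(j(i))/(j(i) − γ)² equals min{4k₁, (4(2+γ)/(2−γ)²)(2k₁ + ρ)}, provided γ < 2 (so that the denominators are nonzero). -/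
set_option maxHeartbeats 1000000


/-- With `χ(y) = k₁(y² + γy) + ρ(γ + y)` and `j(y) = y(y+1)`, the infimum over
positive integers `i` of `4χ(j(i))/(j(i) - γ)²` equals
`min {4k₁, (4(2+γ)/(2-γ)²)(2k₁ + ρ)}`, provided `0 ≤ γ < 2`. -/
theorem inf_spectral_quotient (γ k₁ ρ : ℝ)
    (hγ0 : 0 ≤ γ) (hγ2 : γ < 2) (hk₁ : 0 ≤ k₁) (hρ : 0 ≤ ρ) :
    (⨅ i : ℕ+,
      4 * (k₁ * (((i : ℝ) * ((i : ℝ) + 1)) ^ 2 + γ * ((i : ℝ) * ((i : ℝ) + 1)))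
            + ρ * (γ + (i : ℝ) * ((i : ℝ) + 1)))
        / (((i : ℝ) * ((i : ℝ) + 1)) - γ) ^ 2)
      = min (4 * k₁) ((4 * (2 + γ) / (2 - γ) ^ 2) * (2 * k₁ + ρ)) := by
  have h2γ : (0:ℝ) < 2 - γ := by linarith
  set F : ℕ+ → ℝ := fun i =>
    4 * (k₁ * (((i : ℝ) * ((i : ℝ) + 1)) ^ 2 + γ * ((i : ℝ) * ((i : ℝ) + 1)))
          + ρ * (γ + (i : ℝ) * ((i : ℝ) + 1)))
      / (((i : ℝ) * ((i : ℝ) + 1)) - γ) ^ 2 with hFdef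
  have hx1 : ∀ i : ℕ+, (1:ℝ) ≤ (i:ℝ) := by
    intro i; exact_mod_cast i.one_le
  have hj2 : ∀ i : ℕ+, (2:ℝ) ≤ (i:ℝ)*((i:ℝ)+1) := by
    intro i; nlinarith [hx1 i]
  have hden : ∀ i : ℕ+, (0:ℝ) < ((i:ℝ)*((i:ℝ)+1) - γ) := by
    intro i; nlinarith [hj2 i]
  have hF0 : ∀ i : ℕ+, 0 ≤ F i := by
    intro i
    have hj := hj2 i
    apply div_nonneg
    · have h1 : (0:ℝ) ≤ ((i:ℝ)*((i:ℝ)+1))^2 + γ*((i:ℝ)*((i:ℝ)+1)) := by nlinarith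
      have h2 : (0:ℝ) ≤ γ + (i:ℝ)*((i:ℝ)+1) := by linarith
      nlinarith [mul_nonneg hk₁ h1, mul_nonneg hρ h2]
    · positivity
  have hbdd : BddBelow (Set.range F) := ⟨0, by rintro _ ⟨i, rfl⟩; exact hF0 i⟩
  have hF1 : F 1 = (4 * (2 + γ) / (2 - γ) ^ 2) * (2 * k₁ + ρ) := by
    have hc : (((1:ℕ+)):ℝ) = 1 := by norm_num
    simp only [hFdef, hc]
    rw [div_mul_eq_mul_div, div_eq_div_iff (by nlinarith) (by positivity)]
    ring
  have hεkey : ∀ (ε : ℝ), 0 < ε → ∀ i : ℕ+,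
      4*(4*(3*γ*k₁+ρ) + 4*γ*ρ + 1)/ε + 2 < (i:ℝ) → F i ≤ 4*k₁ + ε := by
    intro ε hε i hbig
    have hCpos : (0:ℝ) < 4*(3*γ*k₁+ρ) + 4*γ*ρ + 1 := by
      nlinarith [mul_nonneg hγ0 hk₁, mul_nonneg hγ0 hρ]
    simp only [hFdef]
    set x : ℝ := ((i:ℕ+):ℝ) with hxdef
    set j : ℝ := x*(x+1) with hjdef
    set C : ℝ := 4*(3*γ*k₁+ρ) + 4*γ*ρ + 1 with hC
    have hx2 : (2:ℝ) < x := by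
      have h0 : (0:ℝ) ≤ 4*(4*(3*γ*k₁+ρ) + 4*γ*ρ + 1)/ε := by positivity
      linarith
    have hj6 : (6:ℝ) ≤ j := by rw [hjdef]; nlinarith
    have hjx : x ≤ j := by rw [hjdef]; nlinarith
    have hjbig : 4*C/ε < j := by
      have : 4*C/ε ≤ 4*C/ε + 2 := by linarith
      linarith
    have hεj : 4*C < ε * j := by
      have := (div_lt_iff₀ hε).mp hjbig
      linarith
    have hdpos : 0 < j - γ := by linarith
    rw [div_le_iff₀ (by positivity)]
    have hjpos : (0:ℝ) < j := by linarith
    have h1 : 4*((3*γ*k₁+ρ)*j + γ*ρ - k₁*γ^2) ≤ C*j := by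
      rw [hC]
      nlinarith [mul_nonneg (mul_nonneg hγ0 hρ) (by linarith : (0:ℝ) ≤ j - 1),
        mul_nonneg hk₁ (sq_nonneg γ)]
    have h2 : C*j ≤ ε*j^2/4 := by
      nlinarith [mul_lt_mul_of_pos_right hεj hjpos]
    have h3 : ε*j^2/4 ≤ ε*(j-γ)^2 := by
      have hin : j^2/4 ≤ (j-γ)^2 := by
        nlinarith [mul_nonneg (by linarith : (0:ℝ) ≤ j/2 - γ)
          (by linarith : (0:ℝ) ≤ 3*j/2 - γ)]
      nlinarith [mul_le_mul_of_nonneg_left hin hε.le]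
    clear_value x j C
    linarith [h1, h2, h3]
  apply le_antisymm
  · apply le_min
    · -- inf ≤ 4k₁
      refine le_of_forall_pos_le_add ?_
      intro ε hε
      obtain ⟨n, hn⟩ := exists_nat_gt (4*(4*(3*γ*k₁+ρ) + 4*γ*ρ + 1)/ε + 2)
      have hCpos : (0:ℝ) < 4*(3*γ*k₁+ρ) + 4*γ*ρ + 1 := by
        nlinarith [mul_nonneg hγ0 hk₁, mul_nonneg hγ0 hρ]
      have h4C : (0:ℝ) < 4*(4*(3*γ*k₁+ρ) + 4*γ*ρ + 1)/ε := by positivity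
      have hn0 : 0 < n := by
        have : (0:ℝ) < (n:ℝ) := by linarith
        exact_mod_cast this
      refine le_trans (ciInf_le hbdd ⟨n, hn0⟩) ?_
      exact hεkey ε hε ⟨n, hn0⟩ (by exact_mod_cast hn)
    · exact le_trans (ciInf_le hbdd 1) (le_of_eq hF1)
  · refine le_ciInf fun i => ?_
    have hjj : (2:ℝ) ≤ (i:ℝ)*((i:ℝ)+1) := hj2 i
    have hdd : (0:ℝ) < ((i:ℝ)*((i:ℝ)+1) - γ) := hden i
    simp only [hFdef]
    set x : ℝ := ((i:ℕ+):ℝ) with hxdef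
    set j : ℝ := x*(x+1) with hjdef
    clear_value x j
    rcases le_or_gt 0 ((3*γ*k₁+ρ)*j + γ*ρ - k₁*γ^2) with hN | hN
    · refine le_trans (min_le_left _ _) ?_
      rw [le_div_iff₀ (by positivity)]
      linarith [hN]
    · refine le_trans (min_le_right _ _) ?_
      rw [div_mul_eq_mul_div, div_le_div_iff₀ (by positivity) (by positivity)]
      have hN2 : (3*γ*k₁+ρ)*2 + γ*ρ - k₁*γ^2 ≤ (3*γ*k₁+ρ)*j + γ*ρ - k₁*γ^2 := by
        nlinarith [mul_nonneg (mul_nonneg hγ0 hk₁) (by linarith : (0:ℝ) ≤ j - 2),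
          mul_nonneg hρ (by linarith : (0:ℝ) ≤ j - 2)]
      have hsq : (2-γ)^2 ≤ (j-γ)^2 := by nlinarith
      have hA : ((3*γ*k₁+ρ)*2 + γ*ρ - k₁*γ^2) * (j-γ)^2 ≤
          ((3*γ*k₁+ρ)*2 + γ*ρ - k₁*γ^2) * (2-γ)^2 := by
        have hN2neg : (3*γ*k₁+ρ)*2 + γ*ρ - k₁*γ^2 < 0 := lt_of_le_of_lt hN2 hN
        nlinarith [hN2neg, hsq]
      have hB : ((3*γ*k₁+ρ)*2 + γ*ρ - k₁*γ^2) * (2-γ)^2 ≤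
          ((3*γ*k₁+ρ)*j + γ*ρ - k₁*γ^2) * (2-γ)^2 := by
        nlinarith [hN2, sq_nonneg (2-γ)]
      linarith [hA, hB]
end
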